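/- Let θ ∈ (0, 1/2) and p > 2 with θ < 1/2 − 1/p. Then for any tempered distribution a with a ∈ H_θ and ∇a ∈ H_θ, one has ‖a‖_{H^{θ, 1/2−θ−1/p}} ≤ ‖a‖_{H_θ}^{1/p} · ‖∇a‖_{H_θ}^{1−1/p}. -/

import Mathlib

/-!
Pointwise, `|ξ_h| ≤ |ξ|` and `|ξ₃| ≤ |ξ|` give
`|ξ_h|^{2θ} |ξ₃|^{1-2θ-2/p} = w · |ξ_h| |ξ₃|^{1-2/p} ≤ w · |ξ|^{2-2/p} = w^{1/p} (w |ξ|²)^{1-1/p}`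
with `w = |ξ_h|^{-1+2θ} |ξ₃|^{-2θ}`; Hölder's inequality with exponents `p` and `p/(p-1)` for the
measure `|â|² dξ` then integrates this bound.
-/

open MeasureTheory ENNReal
open scoped NNReal

noncomputable section

/-- Horizontal frequency modulus `|ξ_h| = √(ξ₁² + ξ₂²)`. -/
def hmod (ξ : Fin 3 → ℝ) : ℝ := Real.sqrt (ξ 0 ^ 2 + ξ 1 ^ 2)

/-- Full frequency modulus `|ξ| = √(ξ₁² + ξ₂² + ξ₃²)`. -/
def fmod (ξ : Fin 3 → ℝ) : ℝ := Real.sqrt (ξ 0 ^ 2 + ξ 1 ^ 2 + ξ 2 ^ 2)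

theorem lintegral_mul_le_of_le_rpow_mul_rpow {α : Type*} [MeasurableSpace α] (μ : Measure α)
    {w₀ w₁ w₂ : α → ℝ≥0∞} (hw₀ : Measurable w₀) (hw₁ : AEMeasurable w₁ μ)
    (hw₂ : AEMeasurable w₂ μ) (hw₀_ne_top : ∀ x, w₀ x ≠ ∞) {r : ℝ} (hr₀ : 0 ≤ r) (hr₁ : r ≤ 1)
    (hle : ∀ x, w₀ x ≤ w₁ x ^ r * w₂ x ^ (1 - r)) (m : α → ℝ≥0∞) :
    ∫⁻ x, w₀ x * m x ∂μ ≤ (∫⁻ x, w₁ x * m x ∂μ) ^ r * (∫⁻ x, w₂ x * m x ∂μ) ^ (1 - r) := by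
  have hr₁' : 0 ≤ 1 - r := sub_nonneg.2 hr₁
  -- Replace `m` by the measurable density `g / w₀ ≤ m`, which loses nothing on the left.
  obtain ⟨g, hg, hg_le, hg_eq⟩ := exists_measurable_le_lintegral_eq μ fun x => w₀ x * m x
  set m' : α → ℝ≥0∞ := fun x => g x / w₀ x
  have hm' : Measurable m' := hg.div hw₀
  have hm'_le : ∀ x, m' x ≤ m x := fun x =>
    ENNReal.div_le_of_le_mul ((hg_le x).trans_eq (mul_comm _ _))
  have hg_le' : ∀ x, g x ≤ w₀ x * m' x := by
    intro x
    rcases eq_or_ne (w₀ x) 0 with h0 | h0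
    · simpa [h0] using hg_le x
    · exact (ENNReal.mul_div_cancel h0 (hw₀_ne_top x)).ge
  have hpt : ∀ x, g x ≤ (w₁ x * m' x) ^ r * (w₂ x * m' x) ^ (1 - r) := by
    intro x
    calc g x ≤ w₀ x * m' x := hg_le' x
      _ ≤ w₁ x ^ r * w₂ x ^ (1 - r) * (m' x ^ r * m' x ^ (1 - r)) := by
          rw [← ENNReal.rpow_add_of_nonneg _ _ hr₀ hr₁', add_sub_cancel, ENNReal.rpow_one]
          exact mul_le_mul_left (hle x) _
      _ = (w₁ x * m' x) ^ r * (w₂ x * m' x) ^ (1 - r) := by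
          rw [ENNReal.mul_rpow_of_nonneg _ _ hr₀, ENNReal.mul_rpow_of_nonneg _ _ hr₁']
          ring
  calc ∫⁻ x, w₀ x * m x ∂μ = ∫⁻ x, g x ∂μ := hg_eq
    _ ≤ ∫⁻ x, (w₁ x * m' x) ^ r * (w₂ x * m' x) ^ (1 - r) ∂μ := lintegral_mono hpt
    _ ≤ (∫⁻ x, w₁ x * m' x ∂μ) ^ r * (∫⁻ x, w₂ x * m' x ∂μ) ^ (1 - r) :=
        ENNReal.lintegral_mul_norm_pow_le (hw₁.mul hm'.aemeasurable) (hw₂.mul hm'.aemeasurable)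
          hr₀ hr₁' (add_sub_cancel r 1)
    _ ≤ (∫⁻ x, w₁ x * m x ∂μ) ^ r * (∫⁻ x, w₂ x * m x ∂μ) ^ (1 - r) := by
        gcongr with x x
        · exact hm'_le x
        · exact hm'_le x

theorem rpow_mul_rpow_le_of_le {θ r h t f : ℝ} (hθ : 0 < θ) (hr : 0 ≤ r) (hθr : θ < 1/2 - r)
    (hh : 0 ≤ h) (ht : 0 ≤ t) (hhf : h ≤ f) (htf : t ≤ f) :
    h ^ (2*θ) * t ^ (2*(1/2 - θ - r)) ≤
      (h ^ (-1 + 2*θ) * t ^ (-(2*θ))) ^ r * (h ^ (-1 + 2*θ) * t ^ (-(2*θ)) * f ^ 2) ^ (1 - r) := by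
  set w := h ^ (-1 + 2*θ) * t ^ (-(2*θ))
  have hf : 0 ≤ f := hh.trans hhf
  have hw : 0 ≤ w := by positivity
  have h_rhs : w ^ r * (w * f ^ 2) ^ (1 - r) = w * (f * f ^ (1 - 2*r)) := by
    rw [Real.mul_rpow hw (sq_nonneg f), ← mul_assoc, ← Real.rpow_add' hw (by norm_num),
      add_sub_cancel, Real.rpow_one, ← Real.rpow_natCast, ← Real.rpow_mul hf,
      ← Real.rpow_one_add' hf (by linarith)]
    congr 2
    push_cast
    ring
  rw [h_rhs]
  rcases hh.eq_or_lt with rfl | hh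
  · rw [Real.zero_rpow (by positivity), zero_mul]
    positivity
  rcases ht.eq_or_lt with rfl | ht
  · rw [Real.zero_rpow (by linarith), mul_zero]
    positivity
  have h_lhs : h ^ (2*θ) * t ^ (2*(1/2 - θ - r)) = w * (h * t ^ (1 - 2*r)) := by
    rw [show 2*θ = (-1 + 2*θ) + 1 by ring, show 2*(1/2 - θ - r) = -(2*θ) + (1 - 2*r) by ring,
      Real.rpow_add hh, Real.rpow_add ht, Real.rpow_one]
    ring
  rw [h_lhs]
  gcongr
  linarith

@[fun_prop]
theorem measurable_hmod : Measurable hmod := by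
  unfold hmod; fun_prop

@[fun_prop]
theorem measurable_fmod : Measurable fmod := by
  unfold fmod; fun_prop

theorem hmod_le_fmod (ξ : Fin 3 → ℝ) : hmod ξ ≤ fmod ξ :=
  Real.sqrt_le_sqrt (le_add_of_nonneg_right (sq_nonneg _))

theorem abs_le_fmod (ξ : Fin 3 → ℝ) : |ξ 2| ≤ fmod ξ := by
  rw [← Real.sqrt_sq_eq_abs]
  exact Real.sqrt_le_sqrt (le_add_of_nonneg_left (by positivity))

theorem stmt12_general (θ p : ℝ) (hθ0 : 0 < θ) (hp : 2 < p)
    (hθp : θ < 1/2 - 1/p) (A : (Fin 3 → ℝ) → ℂ) :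
    ∫⁻ ξ, ENNReal.ofReal (hmod ξ ^ (2*θ) * |ξ 2| ^ (2*(1/2 - θ - 1/p)))
        * (‖A ξ‖₊ : ℝ≥0∞) ^ 2
      ≤ (∫⁻ ξ, ENNReal.ofReal (hmod ξ ^ (-1 + 2*θ) * |ξ 2| ^ (-(2*θ)))
            * (‖A ξ‖₊ : ℝ≥0∞) ^ 2) ^ ((1:ℝ)/p)
        * (∫⁻ ξ, ENNReal.ofReal (hmod ξ ^ (-1 + 2*θ) * |ξ 2| ^ (-(2*θ)) * fmod ξ ^ 2)
            * (‖A ξ‖₊ : ℝ≥0∞) ^ 2) ^ (1 - (1:ℝ)/p) := by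
  have hr₀ : 0 ≤ 1/p := by positivity
  have hr₁ : 1/p ≤ 1 := (div_le_one (by linarith)).2 (by linarith)
  refine lintegral_mul_le_of_le_rpow_mul_rpow volume (by fun_prop) (by fun_prop) (by fun_prop)
    (fun _ => ofReal_ne_top) hr₀ hr₁ (fun ξ => ?_) _
  have hh : 0 ≤ hmod ξ := Real.sqrt_nonneg _
  rw [ofReal_rpow_of_nonneg (by positivity) hr₀, ofReal_rpow_of_nonneg (by positivity) (by linarith),
    ← ofReal_mul (by positivity)]
  exact ofReal_le_ofReal <| rpow_mul_rpow_le_of_le hθ0 hr₀ hθp hh (abs_nonneg _) (hmod_le_fmod ξ)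
    (abs_le_fmod ξ)

/-- For `θ ∈ (0, 1/2)`, `p > 2` with `θ < 1/2 − 1/p`, and any `a` (with `A = â`):
`‖a‖_{H^{θ, 1/2−θ−1/p}} ≤ ‖a‖_{H_θ}^{1/p} ‖∇a‖_{H_θ}^{1−1/p}` (squared-norm form). -/
theorem stmt12 (θ p : ℝ) (hθ0 : 0 < θ) (hθ : θ < 1/2) (hp : 2 < p)
    (hθp : θ < 1/2 - 1/p) (A : (Fin 3 → ℝ) → ℂ) :
    ∫⁻ ξ, ENNReal.ofReal (hmod ξ ^ (2*θ) * |ξ 2| ^ (2*(1/2 - θ - 1/p)))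
        * (‖A ξ‖₊ : ℝ≥0∞) ^ 2
      ≤ (∫⁻ ξ, ENNReal.ofReal (hmod ξ ^ (-1 + 2*θ) * |ξ 2| ^ (-(2*θ)))
            * (‖A ξ‖₊ : ℝ≥0∞) ^ 2) ^ ((1:ℝ)/p)
        * (∫⁻ ξ, ENNReal.ofReal (hmod ξ ^ (-1 + 2*θ) * |ξ 2| ^ (-(2*θ)) * fmod ξ ^ 2)
            * (‖A ξ‖₊ : ℝ≥0∞) ^ 2) ^ (1 - (1:ℝ)/p) :=
  stmt12_general θ p hθ0 hp hθp A

end
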